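/- Let A ∈ GL_d(C(z)) have a single, simple, irreducible pole q (so qA is polynomial). If there exist a unimodular polynomial matrix S and the diagonal matrix D = diag(q·I_r, I_{d−r}), with r = rank(lc_q(A)) and S as in the column-reduction lemma, then B := φ((SD)⁻¹)·A·(SD) has at worst a simple single pole at φ(q), and the φ-dispersion of B at φ(q) equals ℓ−1 where ℓ is the φ-dispersion of A at q. -/

import Mathlib

open Polynomial Matrix

noncomputable section
open scoped Classical

variable {K : Type*} [Field K]

/-- The order (q-adic valuation) of a rational function at an irreducible polynomial `q`. -/
def ordAt (q : Polynomial K) (f : RatFunc K) : WithTop ℤ :=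
  if f = 0 then ⊤ else ((multiplicity q f.num : ℤ) - (multiplicity q f.denom : ℤ) : ℤ)

/-- The order at `q` of a matrix: the minimum of the orders of its entries. -/
def matOrdAt {d : ℕ} (q : Polynomial K) (A : Matrix (Fin d) (Fin d) (RatFunc K)) : WithTop ℤ :=
  (Finset.univ : Finset (Fin d × Fin d)).inf fun ij => ordAt q (A ij.1 ij.2)

/-- The value of a rational function at an irreducible `q` (reduction modulo `q`),
junk value `0` if the function has a pole at `q`. -/
def piAt (q : Polynomial K) (hq : Irreducible q) (f : RatFunc K) : AdjoinRoot q :=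
  letI : Fact (Irreducible q) := ⟨hq⟩
  AdjoinRoot.mk q f.num * (AdjoinRoot.mk q f.denom)⁻¹

/-- Entrywise reduction of a matrix modulo `q`. -/
def matPiAt {d : ℕ} (q : Polynomial K) (hq : Irreducible q)
    (A : Matrix (Fin d) (Fin d) (RatFunc K)) : Matrix (Fin d) (Fin d) (AdjoinRoot q) :=
  Matrix.of fun i j => piAt q hq (A i j)

/-- The leading matrix of `A` at `q`: the value at `q` of `q^n • A` where `n = -ord_q(A)`. -/
def lcAt {d : ℕ} (q : Polynomial K) (hq : Irreducible q) (n : ℤ)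
    (A : Matrix (Fin d) (Fin d) (RatFunc K)) : Matrix (Fin d) (Fin d) (AdjoinRoot q) :=
  matPiAt q hq (Matrix.of fun i j => algebraMap (Polynomial K) (RatFunc K) q ^ n * A i j)

/-- `φ^j` applied to a polynomial: `q(z) ↦ q(z + j)`. -/
def shiftPoly (j : ℕ) (q : Polynomial K) : Polynomial K :=
  q.comp (X + C (j : K))

/-- A common denominator of the entries of a matrix over `C(z)`. -/
def denMat {d : ℕ} (A : Matrix (Fin d) (Fin d) (RatFunc K)) : Polynomial K :=
  ∏ i, ∏ j, (A i j).denom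

/-- `q` is a φ-minimal pole of `A`: `q` divides the denominator of `A`, but no
forward shift `φ^j(q)` (`j ≥ 1`) does. -/
def PhiMinimalPole {d : ℕ} (q : Polynomial K) (A : Matrix (Fin d) (Fin d) (RatFunc K)) : Prop :=
  q ∣ denMat A ∧ ∀ j : ℕ, 1 ≤ j → ¬ shiftPoly j q ∣ denMat A

/-- The φ-dispersion of `A` at `q`: the largest `ℓ ≥ 1` with `φ^ℓ(q) ∣ num(det A)` (0 if none). -/
def phiDispersion {d : ℕ} (q : Polynomial K) (A : Matrix (Fin d) (Fin d) (RatFunc K)) : ℕ :=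
  sSup {ℓ : ℕ | 0 < ℓ ∧ shiftPoly ℓ q ∣ (Matrix.det A).num}


/-- The gauge transform `T[A]_φ = φ(T⁻¹) A T` for a polynomial transformation `T`. -/
def gaugeT {d : ℕ} (phi : RatFunc K ≃+* RatFunc K)
    (Tp : Matrix (Fin d) (Fin d) (Polynomial K))
    (M : Matrix (Fin d) (Fin d) (RatFunc K)) : Matrix (Fin d) (Fin d) (RatFunc K) :=
  ((Tp.map (algebraMap (Polynomial K) (RatFunc K)))⁻¹.map ⇑phi) * M
    * (Tp.map (algebraMap (Polynomial K) (RatFunc K)))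

section Stmt7Aux

lemma shiftPoly_zero_eq (q : Polynomial K) : shiftPoly 0 q = q := by
  simp [shiftPoly]

lemma shiftPoly_shiftPoly (a b : ℕ) (q : Polynomial K) :
    shiftPoly a (shiftPoly b q) = shiftPoly (b + a) q := by
  unfold shiftPoly
  rw [Polynomial.comp_assoc]
  congr 1
  push_cast
  simp only [add_comp, X_comp, C_comp, C_add]
  ring

lemma shiftPoly_ne_zero {q : Polynomial K} (hq : q ≠ 0) (j : ℕ) : shiftPoly j q ≠ 0 :=
  comp_X_add_C_ne_zero_iff.mpr hq

lemma shiftPoly_irreducible {q : Polynomial K} (hq : Irreducible q) (j : ℕ) :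
    Irreducible (shiftPoly j q) := by
  have h : shiftPoly j q = algEquivAevalXAddC ((j : K)) q := by
    simp [shiftPoly, comp_eq_aeval, algEquivAevalXAddC]
  rw [h]
  exact hq.map (algEquivAevalXAddC ((j : K)))

lemma shiftPoly_map_subtype {Cs : Subfield ℂ} (q : Polynomial ↥Cs) (m : ℕ) :
    (shiftPoly m q).map Cs.subtype = (q.map Cs.subtype).comp (X + C (m : ℂ)) := by
  simp [shiftPoly, Polynomial.map_comp, Polynomial.map_add, map_natCast]

lemma shiftPoly_not_dvd {Cs : Subfield ℂ} {q : Polynomial ↥Cs} (hq : Irreducible q)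
    {a b : ℕ} (hab : a ≠ b) : ¬ shiftPoly a q ∣ shiftPoly b q := by
  intro hdvd
  have hinj : Function.Injective (Cs.subtype) := Subtype.val_injective
  set Q : Polynomial ℂ := q.map Cs.subtype with hQdef
  have hQ0 : Q ≠ 0 := by
    simpa [hQdef, Polynomial.map_eq_zero_iff hinj] using hq.ne_zero
  have hdeg : 0 < Q.degree := by
    rw [hQdef, Polynomial.degree_map_eq_of_injective hinj]
    exact natDegree_pos_iff_degree_pos.mp hq.natDegree_pos
  obtain ⟨α, hα⟩ := Complex.exists_root hdeg
  have hdvd' : Q.comp (X + C (a : ℂ)) ∣ Q.comp (X + C (b : ℂ)) := by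
    rw [← shiftPoly_map_subtype, ← shiftPoly_map_subtype]
    exact Polynomial.map_dvd Cs.subtype hdvd
  have hδ : ((b : ℂ) - (a : ℂ)) ≠ 0 := by
    rw [sub_ne_zero]
    exact_mod_cast hab.symm
  have step : ∀ x : ℂ, Q.IsRoot x → Q.IsRoot (x + ((b : ℂ) - (a : ℂ))) := by
    intro x hx
    have h1 : (Q.comp (X + C (a : ℂ))).IsRoot (x - (a : ℂ)) := by
      simp only [Polynomial.IsRoot, Polynomial.eval_comp, eval_add, eval_X, eval_C,
        sub_add_cancel]
      exact hx
    have h2 : (Q.comp (X + C (b : ℂ))).IsRoot (x - (a : ℂ)) := h1.dvd hdvd'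
    simp only [Polynomial.IsRoot, Polynomial.eval_comp, eval_add, eval_X, eval_C] at h2 ⊢
    convert h2 using 2
    exacts [rfl, by ring]
  set g : ℕ → ℂ := fun k => α + k * ((b : ℂ) - (a : ℂ)) with hg
  have hgroot : ∀ k, Q.IsRoot (g k) := by
    intro k
    induction k with
    | zero => simpa [hg] using hα
    | succ n ih =>
      have h := step _ ih
      have he : g (n + 1) = g n + ((b : ℂ) - (a : ℂ)) := by
        simp only [hg]
        push_cast
        ring
      rw [he]
      exact h
  have hginj : Function.Injective g := by
    intro k1 k2 h
    simp only [hg] at h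
    have h2 := mul_right_cancel₀ hδ (add_left_cancel h)
    exact_mod_cast h2
  refine (Set.infinite_of_injective_forall_mem (s := {x | Q.IsRoot x}) hginj
    (fun k => hgroot k)) (Polynomial.finite_setOf_isRoot hQ0)

lemma finite_shift_dvd {Cs : Subfield ℂ} {q N : Polynomial ↥Cs} (hq : Irreducible q)
    (hN : N ≠ 0) : {m : ℕ | shiftPoly m q ∣ N}.Finite := by
  have hinj : Function.Injective (Cs.subtype) := Subtype.val_injective
  have hQ0 : q.map Cs.subtype ≠ 0 := by
    simpa [Polynomial.map_eq_zero_iff hinj] using hq.ne_zero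
  have hN0 : N.map Cs.subtype ≠ 0 := by
    simpa [Polynomial.map_eq_zero_iff hinj] using hN
  have hdeg : 0 < (q.map Cs.subtype).degree := by
    rw [Polynomial.degree_map_eq_of_injective hinj]
    exact natDegree_pos_iff_degree_pos.mp hq.natDegree_pos
  obtain ⟨α, hα⟩ := Complex.exists_root hdeg
  have hsub : {m : ℕ | shiftPoly m q ∣ N}
      ⊆ (fun m : ℕ => α - (m : ℂ)) ⁻¹' {x | (N.map Cs.subtype).IsRoot x} := by
    intro m hm
    have hdvd : ((q.map Cs.subtype).comp (X + C (m : ℂ))) ∣ N.map Cs.subtype := by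
      have h := Polynomial.map_dvd Cs.subtype hm
      rwa [shiftPoly_map_subtype] at h
    have hroot : ((q.map Cs.subtype).comp (X + C (m : ℂ))).IsRoot (α - (m : ℂ)) := by
      simp only [Polynomial.IsRoot, Polynomial.eval_comp, eval_add, eval_X, eval_C,
        sub_add_cancel]
      exact hα
    exact hroot.dvd hdvd
  refine Set.Finite.subset (Set.Finite.preimage ?_ (Polynomial.finite_setOf_isRoot hN0)) hsub
  intro m1 _ m2 _ h
  have h2 : (m1 : ℂ) = (m2 : ℂ) := sub_right_injective h
  exact_mod_cast h2

lemma dvd_num_iff {f : RatFunc K} {P Q p : Polynomial K}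
    (hQ : Q ≠ 0)
    (hrel : f * algebraMap (Polynomial K) (RatFunc K) Q
      = algebraMap (Polynomial K) (RatFunc K) P)
    (hp : Prime p) (hpQ : ¬ p ∣ Q) : p ∣ f.num ↔ p ∣ P := by
  have hfe : f = algebraMap (Polynomial K) (RatFunc K) P
      / algebraMap (Polynomial K) (RatFunc K) Q := by
    rw [eq_div_iff (RatFunc.algebraMap_ne_zero hQ)]
    exact hrel
  have h1 : f.num * Q = P * f.denom := (RatFunc.num_mul_eq_mul_denom_iff hQ).mpr hfe
  have hdd : f.denom ∣ Q := (RatFunc.denom_dvd hQ).mpr ⟨P, hfe⟩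
  constructor
  · intro h
    have h2 : p ∣ P * f.denom := by
      rw [← h1]
      exact h.mul_right Q
    rcases hp.dvd_mul.mp h2 with h' | h'
    · exact h'
    · exact absurd (h'.trans hdd) hpQ
  · intro h
    have h2 : p ∣ f.num * Q := by
      rw [h1]
      exact h.mul_right f.denom
    rcases hp.dvd_mul.mp h2 with h' | h'
    · exact h'
    · exact absurd h' hpQ

lemma sSup_shift_pred (T : Set ℕ) (hbdd : BddAbove T) (hpos : ∀ m ∈ T, 0 < m) :
    sSup {ℓ : ℕ | 0 < ℓ ∧ ℓ + 1 ∈ T} = sSup T - 1 := by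
  rcases T.eq_empty_or_nonempty with hT | hT
  · have h1 : {ℓ : ℕ | 0 < ℓ ∧ ℓ + 1 ∈ T} = ∅ := by
      ext ℓ
      simp [hT]
    rw [h1, hT]
    simp
  · have hM := Nat.sSup_mem hT hbdd
    have hub : ∀ m ∈ T, m ≤ sSup T := fun m hm => le_csSup hbdd hm
    rcases Nat.lt_or_ge (sSup T) 2 with h2 | h2
    · have hM1 : sSup T = 1 := by
        have := hpos _ hM
        omega
      have h1 : {ℓ : ℕ | 0 < ℓ ∧ ℓ + 1 ∈ T} = ∅ := by
        ext ℓ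
        simp only [Set.mem_setOf_eq, Set.mem_empty_iff_false, iff_false, not_and]
        intro hℓ hmem
        have := hub _ hmem
        omega
      rw [h1, hM1]
      simp
    · have hgt : IsGreatest {ℓ : ℕ | 0 < ℓ ∧ ℓ + 1 ∈ T} (sSup T - 1) := by
        constructor
        · refine ⟨by omega, ?_⟩
          have he : sSup T - 1 + 1 = sSup T := by omega
          rw [he]
          exact hM
        · rintro ℓ ⟨h0, hmem⟩
          have := hub _ hmem
          omega
      exact hgt.csSup_eq

end Stmt7Aux

set_option maxHeartbeats 2000000 in
set_option synthInstance.maxHeartbeats 400000 in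
/-- after one shearing step `B := (SD)[A]_φ` has at worst a single
simple pole at `φ(q)` and its φ-dispersion there is `ℓ - 1`. -/
theorem stmt7 (Cs : Subfield ℂ) {d : ℕ}
    (phi : RatFunc ↥Cs ≃+* RatFunc ↥Cs)
    (hphi : ∀ p : Polynomial ↥Cs, phi (algebraMap (Polynomial ↥Cs) (RatFunc ↥Cs) p)
        = algebraMap (Polynomial ↥Cs) (RatFunc ↥Cs) (p.comp (X + C 1)))
    (q : Polynomial ↥Cs) (hq : Irreducible q)
    (A : Matrix (Fin d) (Fin d) (RatFunc ↥Cs)) (hA : A.det ≠ 0)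
    (Ap : Matrix (Fin d) (Fin d) (Polynomial ↥Cs))
    (hAp : ∀ i j, algebraMap (Polynomial ↥Cs) (RatFunc ↥Cs) q * A i j
        = algebraMap (Polynomial ↥Cs) (RatFunc ↥Cs) (Ap i j))
    (r : ℕ) (hr : r = (lcAt q hq (1 : ℤ) A).rank)
    (Sp : Matrix (Fin d) (Fin d) (Polynomial ↥Cs)) (hS : IsUnit Sp.det)
    (hblock : ∀ i j : Fin d,
      ((j : ℕ) < r → ∃ p : Polynomial ↥Cs,
        algebraMap (Polynomial ↥Cs) (RatFunc ↥Cs) q * (gaugeT phi Sp A) i j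
          = algebraMap (Polynomial ↥Cs) (RatFunc ↥Cs) p) ∧
      (r ≤ (j : ℕ) → ∃ p : Polynomial ↥Cs,
        (gaugeT phi Sp A) i j = algebraMap (Polynomial ↥Cs) (RatFunc ↥Cs) p))
    (D : Matrix (Fin d) (Fin d) (Polynomial ↥Cs))
    (hD : D = Matrix.diagonal (fun i : Fin d => if (i : ℕ) < r then q else 1)) :
    (∃ Bp : Matrix (Fin d) (Fin d) (Polynomial ↥Cs), ∀ i j,
      algebraMap (Polynomial ↥Cs) (RatFunc ↥Cs) (shiftPoly 1 q) * (gaugeT phi (Sp * D) A) i j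
        = algebraMap (Polynomial ↥Cs) (RatFunc ↥Cs) (Bp i j)) ∧
    phiDispersion (shiftPoly 1 q) (gaugeT phi (Sp * D) A) = phiDispersion q A - 1 := by
  classical
  set alg := algebraMap (Polynomial ↥Cs) (RatFunc ↥Cs) with halgdef
  have hq0 : q ≠ 0 := hq.ne_zero
  have hqa0 : alg q ≠ 0 := RatFunc.algebraMap_ne_zero hq0
  set s1 : Polynomial ↥Cs := shiftPoly 1 q with hs1def
  have hs1e : s1 = q.comp (X + C 1) := by
    rw [hs1def]
    simp [shiftPoly]
  have hs10 : s1 ≠ 0 := by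
    rw [hs1def]
    exact shiftPoly_ne_zero hq0 1
  have hs1a0 : alg s1 ≠ 0 := RatFunc.algebraMap_ne_zero hs10
  set v : Fin d → RatFunc ↥Cs := fun i => alg (if (i : ℕ) < r then q else 1) with hv
  have hv0 : ∀ i, v i ≠ 0 := by
    intro i
    rw [hv]
    by_cases h : (i : ℕ) < r <;> simp [h, hqa0]
  set S' := Sp.map ⇑alg with hS'
  set D' := D.map ⇑alg with hD'
  have map_mulP : ∀ (M N : Matrix (Fin d) (Fin d) (Polynomial ↥Cs)),
      (M * N).map ⇑alg = (M.map ⇑alg) * (N.map ⇑alg) := by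
    intro M N
    ext i j
    simp [Matrix.map_apply, Matrix.mul_apply, map_sum]
  have map_mul' : ∀ (M N : Matrix (Fin d) (Fin d) (RatFunc ↥Cs)),
      (M * N).map ⇑phi = (M.map ⇑phi) * (N.map ⇑phi) := by
    intro M N
    ext i j
    simp [Matrix.map_apply, Matrix.mul_apply, map_sum]
  have hT : (Sp * D).map ⇑alg = S' * D' := map_mulP Sp D
  have hDdiag : D' = Matrix.diagonal v := by
    rw [hD', hD, Matrix.diagonal_map (map_zero alg)]
  have hDinv : D'⁻¹ = Matrix.diagonal (fun i => (v i)⁻¹) := by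
    rw [hDdiag]
    apply Matrix.inv_eq_right_inv
    rw [Matrix.diagonal_mul_diagonal]
    have : (fun i => v i * (v i)⁻¹) = fun _ : Fin d => (1 : RatFunc ↥Cs) := by
      funext i
      exact mul_inv_cancel₀ (hv0 i)
    rw [this, Matrix.diagonal_one]
  have hL : gaugeT phi (Sp * D) A
      = Matrix.diagonal (fun i => phi ((v i)⁻¹)) * gaugeT phi Sp A * Matrix.diagonal v := by
    unfold gaugeT
    rw [hT, Matrix.mul_inv_rev, hDinv, map_mul',
        Matrix.diagonal_map (map_zero phi), hDdiag]
    simp only [Matrix.mul_assoc, Function.comp]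
    rfl
  have hBentry : ∀ i j, gaugeT phi (Sp * D) A i j
      = (phi (v i))⁻¹ * gaugeT phi Sp A i j * v j := by
    intro i j
    rw [hL, Matrix.mul_diagonal, Matrix.diagonal_mul, map_inv₀]
  have hphiv : ∀ i : Fin d, phi (v i) = alg (if (i : ℕ) < r then s1 else 1) := by
    intro i
    rw [hv]
    by_cases h : (i : ℕ) < r
    · simp only [if_pos h]
      rw [hphi]
      congr 1
      exact hs1e.symm
    · simp only [if_neg h]
      rw [hphi]
      simp
  -- Part 1
  have key : ∀ i j, ∃ p : Polynomial ↥Cs,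
      alg s1 * gaugeT phi (Sp * D) A i j = alg p := by
    intro i j
    obtain ⟨h1, h2⟩ := hblock i j
    by_cases hj : (j : ℕ) < r
    · obtain ⟨p, hp⟩ := h1 hj
      have hvj : v j = alg q := by
        rw [hv]
        simp [hj]
      by_cases hi : (i : ℕ) < r
      · refine ⟨p, ?_⟩
        rw [hBentry, hphiv, if_pos hi, hvj, ← mul_assoc, ← mul_assoc,
          mul_inv_cancel₀ hs1a0, one_mul, mul_comm]
        exact hp
      · refine ⟨s1 * p, ?_⟩
        rw [hBentry, hphiv, if_neg hi, hvj, _root_.map_one, inv_one, one_mul, _root_.map_mul,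
          mul_comm (gaugeT phi Sp A i j) (alg q), hp]
    · obtain ⟨p, hp⟩ := h2 (le_of_not_gt hj)
      have hvj : v j = 1 := by
        rw [hv]
        simp [hj]
      by_cases hi : (i : ℕ) < r
      · refine ⟨p, ?_⟩
        rw [hBentry, hphiv, if_pos hi, hvj, mul_one, ← mul_assoc,
          mul_inv_cancel₀ hs1a0, one_mul]
        exact hp
      · refine ⟨s1 * p, ?_⟩
        rw [hBentry, hphiv, if_neg hi, hvj, _root_.map_one, inv_one, one_mul, mul_one, _root_.map_mul, hp]
  -- determinant relations
  have hdetA : A.det * (alg q) ^ d = alg Ap.det := by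
    have hAq : (alg q) • A = Ap.map ⇑alg := by
      ext i j
      simp only [Matrix.smul_apply, smul_eq_mul, Matrix.map_apply]
      exact hAp i j
    have h1 := Matrix.det_smul A (alg q)
    rw [hAq] at h1
    have h2 : (Ap.map ⇑alg).det = alg Ap.det := by
      rw [RingHom.map_det]
      rfl
    rw [h2, Fintype.card_fin] at h1
    rw [h1]
    ring
  have hdetApne : Ap.det ≠ 0 := by
    intro h0
    rw [h0, map_zero] at hdetA
    rcases mul_eq_zero.mp hdetA with h | h
    · exact hA h
    · exact pow_ne_zero d hqa0 h
  obtain ⟨c, hcu, hc⟩ := Polynomial.isUnit_iff.mp hS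
  set e := (Finset.univ.filter (fun i : Fin d => (i : ℕ) < r)).card with he
  have hdetD : D.det = q ^ e := by
    rw [hD, Matrix.det_diagonal, Finset.prod_ite, Finset.prod_const,
      Finset.prod_const_one, mul_one]
  have hdetSD : (Sp * D).det = C c * q ^ e := by
    rw [Matrix.det_mul, ← hc, hdetD]
  have hc0 : (c : ↥Cs) ≠ 0 := hcu.ne_zero
  have hCc0 : alg (C c) ≠ 0 := RatFunc.algebraMap_ne_zero (by simp [hc0])
  have hphidet : phi (alg ((Sp * D).det)) = alg (C c * s1 ^ e) := by
    rw [hphi]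
    congr 1
    rw [hdetSD, mul_comp, C_comp, pow_comp, hs1e]
  have hdetB : (gaugeT phi (Sp * D) A).det * alg (q ^ d * s1 ^ e)
      = alg (Ap.det * q ^ e) := by
    have detmapphi : ∀ M : Matrix (Fin d) (Fin d) (RatFunc ↥Cs),
        (M.map ⇑phi).det = phi M.det := by
      intro M
      rw [RingEquiv.map_det]
      rfl
    have hTdet : ((Sp * D).map ⇑alg).det = alg ((Sp * D).det) := by
      rw [RingHom.map_det]
      rfl
    have hinvdet : ((((Sp * D).map ⇑alg))⁻¹).det = (alg ((Sp * D).det))⁻¹ := by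
      rw [Matrix.det_nonsing_inv, hTdet, Ring.inverse_eq_inv]
    unfold gaugeT
    rw [Matrix.det_mul, Matrix.det_mul, detmapphi, hinvdet, hTdet, map_inv₀,
      hphidet, hdetSD]
    simp only [_root_.map_mul, _root_.map_pow]
    field_simp
    linear_combination hdetA
  -- primality and non-divisibility of shifts
  have primes : ∀ m : ℕ, Prime (shiftPoly m q) := fun m => (shiftPoly_irreducible hq m).prime
  have hiffA : ∀ m : ℕ, 0 < m →
      (shiftPoly m q ∣ (A.det).num ↔ shiftPoly m q ∣ Ap.det) := by
    intro m hm
    refine dvd_num_iff (pow_ne_zero d hq0) ?_ (primes m) ?_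
    · rw [map_pow]
      exact hdetA
    · intro h
      have hqd : shiftPoly m q ∣ q := (primes m).dvd_of_dvd_pow h
      refine shiftPoly_not_dvd hq (by omega : m ≠ 0) ?_
      rw [shiftPoly_zero_eq]
      exact hqd
  have hiffB : ∀ m : ℕ, 0 < m →
      (shiftPoly m s1 ∣ (gaugeT phi (Sp * D) A).det.num ↔ shiftPoly (1 + m) q ∣ Ap.det) := by
    intro m hm
    rw [hs1def, shiftPoly_shiftPoly]
    have hnd : ¬ shiftPoly (1 + m) q ∣ q ^ d * s1 ^ e := by
      intro h
      rcases (primes (1 + m)).dvd_mul.mp h with h' | h'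
      · have hqd := (primes (1 + m)).dvd_of_dvd_pow h'
        refine shiftPoly_not_dvd hq (by omega : 1 + m ≠ 0) ?_
        rw [shiftPoly_zero_eq]
        exact hqd
      · have hqd := (primes (1 + m)).dvd_of_dvd_pow h'
        rw [hs1def] at hqd
        exact shiftPoly_not_dvd hq (by omega : 1 + m ≠ 1) hqd
    rw [dvd_num_iff (mul_ne_zero (pow_ne_zero d hq0) (pow_ne_zero e hs10)) hdetB
      (primes (1 + m)) hnd]
    constructor
    · intro hx
      rcases (primes (1 + m)).dvd_mul.mp hx with h' | h'
      · exact h'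
      · exfalso
        have hqd := (primes (1 + m)).dvd_of_dvd_pow h'
        refine shiftPoly_not_dvd hq (by omega : 1 + m ≠ 0) ?_
        rw [shiftPoly_zero_eq]
        exact hqd
    · intro hx
      exact hx.mul_right _
  refine ⟨⟨Matrix.of (fun i j => (key i j).choose), fun i j => (key i j).choose_spec⟩, ?_⟩
  set T₀ : Set ℕ := {m : ℕ | 0 < m ∧ shiftPoly m q ∣ Ap.det} with hT₀
  have hfin : T₀.Finite := (finite_shift_dvd hq hdetApne).subset (fun m hm => hm.2)
  have hbdd : BddAbove T₀ := hfin.bddAbove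
  have hA' : {ℓ : ℕ | 0 < ℓ ∧ shiftPoly ℓ q ∣ (Matrix.det A).num} = T₀ := by
    ext ℓ
    simp only [hT₀, Set.mem_setOf_eq]
    exact and_congr_right fun h1 => hiffA ℓ h1
  have hB' : {ℓ : ℕ | 0 < ℓ ∧ shiftPoly ℓ s1 ∣ (Matrix.det (gaugeT phi (Sp * D) A)).num}
      = {ℓ : ℕ | 0 < ℓ ∧ ℓ + 1 ∈ T₀} := by
    ext ℓ
    simp only [hT₀, Set.mem_setOf_eq]
    constructor
    · rintro ⟨h1, h2⟩
      refine ⟨h1, Nat.succ_pos ℓ, ?_⟩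
      have h3 := (hiffB ℓ h1).mp h2
      rwa [Nat.add_comm] at h3
    · rintro ⟨h1, _, h3⟩
      exact ⟨h1, (hiffB ℓ h1).mpr (by rwa [Nat.add_comm])⟩
  unfold phiDispersion
  rw [hB', hA', sSup_shift_pred T₀ hbdd (fun m hm => hm.1)]

end
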